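/- arXiv:1812.10992 — 9 statements merged into one kernel-verified Lean document; each statement's English description precedes it below -/
import Mathlib

section
/- Define the slanting rain of length ℓ with step b and origin (x₀,y₀) as the set of rational points consisting of the base {(x₀+κb, y₀) : 0 ≤ κ ≤ ℓ-1} together with the layers {(x₀+κb, y₀+1/(kb)) : 1 ≤ k ≤ ℓ-1, 0 ≤ κ ≤ ℓ-1-k}. Then the layer points are exactly the apexes (upper vertices) of the right triangles of area 1/2 of the form {(x,y),(x+c,y),(x,y+a)} with ac = 1 whose two lower vertices lie in the base. -/
/-- The base of a slanting rain of length `ℓ` with step `b` and origin `(x₀, y₀)`. -/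
def rainBase (x₀ y₀ b : ℚ) (ℓ : ℕ) : Set (ℚ × ℚ) :=
  {p | ∃ κ : ℕ, κ ≤ ℓ - 1 ∧ p = (x₀ + κ * b, y₀)}

/-- The layers of a slanting rain of length `ℓ` with step `b` and origin `(x₀, y₀)`. -/
def rainLayers (x₀ y₀ b : ℚ) (ℓ : ℕ) : Set (ℚ × ℚ) :=
  {p | ∃ k κ : ℕ, 1 ≤ k ∧ k ≤ ℓ - 1 ∧ κ ≤ ℓ - 1 - k ∧
    p = (x₀ + κ * b, y₀ + 1 / (k * b))}

/-!
An area-`1/2` standard triangle on the base is determined by its two lower vertices, which are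
base points `κ` and `κ + k` steps from the origin with `k ≥ 1`; its legs are `c = k b` and
`a = 1 / (k b)`, so its apex is the layer point `(x₀ + κ b, y₀ + 1 / (k b))`, and
`κ + k ≤ ℓ - 1` is exactly the constraint `κ ≤ ℓ - 1 - k` defining the layers.
-/

section

variable {x₀ y₀ b : ℚ} {ℓ : ℕ}

theorem mk_mem_rainBase_iff {x y : ℚ} :
    (x, y) ∈ rainBase x₀ y₀ b ℓ ↔ ∃ κ : ℕ, κ ≤ ℓ - 1 ∧ x = x₀ + κ * b ∧ y = y₀ := by
  simp only [rainBase, Set.mem_ofPred_eq, Prod.mk.injEq]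

theorem mk_mem_rainBase_and_add_mem_rainBase_iff (hb : 0 < b) {x y c : ℚ} :
    ((x, y) ∈ rainBase x₀ y₀ b ℓ ∧ (x + c, y) ∈ rainBase x₀ y₀ b ℓ ∧ 0 < c) ↔
      ∃ k κ : ℕ, 1 ≤ k ∧ κ + k ≤ ℓ - 1 ∧ x = x₀ + κ * b ∧ y = y₀ ∧ c = k * b := by
  simp only [mk_mem_rainBase_iff]
  constructor
  · rintro ⟨⟨κ, hκ, rfl, rfl⟩, ⟨κ', hκ', hx', -⟩, hc⟩
    have hc' : c = ((κ' : ℚ) - κ) * b := by linarith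
    have hlt : κ < κ' := by
      have : (κ : ℚ) < κ' := by nlinarith
      exact_mod_cast this
    refine ⟨κ' - κ, κ, by omega, by omega, rfl, rfl, ?_⟩
    rw [hc', Nat.cast_sub hlt.le]
  · rintro ⟨k, κ, hk, hκk, rfl, rfl, rfl⟩
    refine ⟨⟨κ, by omega, rfl, rfl⟩, ⟨κ + k, hκk, by push_cast; ring, rfl⟩, ?_⟩
    have : (0 : ℚ) < k := by exact_mod_cast hk
    positivity

end

theorem rainLayers_eq_apexes_general (x₀ y₀ b : ℚ) (hb : 0 < b) (ℓ : ℕ) (p : ℚ × ℚ) :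
    p ∈ rainLayers x₀ y₀ b ℓ ↔
      ∃ x y a c : ℚ, 0 < a ∧ 0 < c ∧ a * c = 1 ∧
        (x, y) ∈ rainBase x₀ y₀ b ℓ ∧ (x + c, y) ∈ rainBase x₀ y₀ b ℓ ∧
        p = (x, y + a) := by
  constructor
  · rintro ⟨k, κ, hk, hkℓ, hκ, rfl⟩
    have hκk : κ + k ≤ ℓ - 1 := by omega
    obtain ⟨hbase, hbase', hc⟩ := (mk_mem_rainBase_and_add_mem_rainBase_iff hb (c := k * b)).2
      ⟨k, κ, hk, hκk, rfl, rfl, rfl⟩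
    exact ⟨_, _, _, _, one_div_pos.2 hc, hc, one_div_mul_cancel hc.ne', hbase, hbase', rfl⟩
  · rintro ⟨x, y, a, c, -, hc, hac, hbase, hbase', rfl⟩
    obtain ⟨k, κ, hk, hκk, rfl, rfl, rfl⟩ :=
      (mk_mem_rainBase_and_add_mem_rainBase_iff hb).1 ⟨hbase, hbase', hc⟩
    exact ⟨k, κ, hk, by omega, by omega, by rw [eq_one_div_of_mul_eq_one_left hac]⟩

/-- The layer points of a slanting rain are exactly the apexes of the standard triangles of
area `1/2` whose two lower vertices lie in the base. -/
theorem rainLayers_eq_apexes (x₀ y₀ b : ℚ) (hb : 0 < b) (ℓ : ℕ) (hℓ : 2 ≤ ℓ) (p : ℚ × ℚ) :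
    p ∈ rainLayers x₀ y₀ b ℓ ↔
      ∃ x y a c : ℚ, 0 < a ∧ 0 < c ∧ a * c = 1 ∧
        (x, y) ∈ rainBase x₀ y₀ b ℓ ∧ (x + c, y) ∈ rainBase x₀ y₀ b ℓ ∧
        p = (x, y + a) :=
  rainLayers_eq_apexes_general x₀ y₀ b hb ℓ p
end

section
/- For any ℓ ≥ 2, the layers of a slanting rain of length L = ℓ!·ℓ + 1 (with any rational step b > 0 and any rational origin) contain, as a subset, a slanting rain of length ℓ. -/
/-!
Take the step `N b`, where `N = ℓ!` (any positive common multiple of `1, …, ℓ` works), and lift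
the origin to the height of layer `N` of the big rain. As the new step is a multiple of `b`, every
point of the small rain lies on a column of the big one, and the base lies in layer `N`. Layer `k`
of the small rain sits at height `1/(N b) + 1/(k N b)`; writing `N = (k + 1) d`, the identity
`1/(k + 1) + 1/(k (k + 1)) = 1/k` turns this into `1/(k d b)`, the height of layer `k d`.
-/

theorem one_div_mul_add_one_div_mul_mul {K : Type*} [Field K] [CharZero K] {k : ℕ}
    (hk : k ≠ 0) (c : K) :
    1 / ((k + 1) * c) + 1 / (k * ((k + 1) * c)) = 1 / (k * c) := by
  rcases eq_or_ne c 0 with rfl | hc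
  · simp
  have hk' : (k : K) ≠ 0 := Nat.cast_ne_zero.mpr hk
  have hk1 : (k : K) + 1 ≠ 0 := by exact_mod_cast k.succ_ne_zero
  field_simp

section

variable {x₀ y₀ b : ℚ} {ℓ N : ℕ}

theorem mk_mem_rainLayers {L m j : ℕ} (hm : 1 ≤ m) (hjm : j + m ≤ L - 1) :
    (x₀ + j * b, y₀ + 1 / (m * b)) ∈ rainLayers x₀ y₀ b L :=
  ⟨m, j, hm, by omega, by omega, rfl⟩

theorem rainBase_subset_rainLayers (hN : 0 < N) (hℓ : 1 ≤ ℓ) :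
    rainBase x₀ (y₀ + 1 / (N * b)) (N * b) ℓ ⊆ rainLayers x₀ y₀ b (N * ℓ + 1) := by
  rintro _ ⟨κ, hκ, rfl⟩
  have hκN : κ * N + N ≤ N * ℓ + 1 - 1 := by
    have : (κ + 1) * N ≤ ℓ * N := Nat.mul_le_mul_right N (by omega)
    rw [Nat.add_sub_cancel]
    linarith
  convert mk_mem_rainLayers (L := N * ℓ + 1) hN hκN using 2
  push_cast
  ring

theorem rainLayers_subset_rainLayers (hN : 0 < N) (hdvd : ∀ j, 0 < j → j ≤ ℓ → j ∣ N) :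
    rainLayers x₀ (y₀ + 1 / (N * b)) (N * b) ℓ ⊆ rainLayers x₀ y₀ b (N * ℓ + 1) := by
  rintro _ ⟨k, κ, hk, hkℓ, hκ, rfl⟩
  obtain ⟨d, rfl⟩ := hdvd (k + 1) k.succ_pos (by omega)
  have hd : 0 < d := pos_of_mul_pos_right hN (Nat.zero_le _)
  have hκN : κ * ((k + 1) * d) + k * d ≤ (k + 1) * d * ℓ + 1 - 1 := by
    have : (κ + 1) * ((k + 1) * d) ≤ ℓ * ((k + 1) * d) := Nat.mul_le_mul_right _ (by omega)
    rw [Nat.add_sub_cancel]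
    nlinarith
  convert mk_mem_rainLayers (L := (k + 1) * d * ℓ + 1) (Nat.mul_pos hk hd) hκN using 1
  ext
  · push_cast
    ring
  · have key := one_div_mul_add_one_div_mul_mul (K := ℚ) (by omega : k ≠ 0) (d * b)
    push_cast
    simp only [mul_assoc] at key ⊢
    rw [add_assoc, key]

end

/-- The layers of a slanting rain of length `ℓ! · ℓ + 1` contain a slanting rain of length `ℓ`. -/
theorem subRain_exists (ℓ : ℕ) (hℓ : 2 ≤ ℓ) (x₀ y₀ b : ℚ) (hb : 0 < b) :
    ∃ x₀' y₀' b' : ℚ, 0 < b' ∧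
      rainBase x₀' y₀' b' ℓ ∪ rainLayers x₀' y₀' b' ℓ ⊆
        rainLayers x₀ y₀ b (ℓ.factorial * ℓ + 1) := by
  refine ⟨x₀, y₀ + 1 / (ℓ.factorial * b), ℓ.factorial * b,
    mul_pos (Nat.cast_pos.mpr ℓ.factorial_pos) hb, Set.union_subset ?_ ?_⟩
  · exact rainBase_subset_rainLayers ℓ.factorial_pos (by omega)
  · exact rainLayers_subset_rainLayers ℓ.factorial_pos fun _ => Nat.dvd_factorial
end

section
/- If the rational points of a slanting rain whose base is a monochromatic horizontal arithmetic progression of 5 points with step b are colored so that the base has one color, then either some layer point has the base's color, or among the layer points at heights 1/b and 1/(2b) there exist three points forming a standard triangle of area 1/2 all colored differently from the base but pairwise in the same (second) color — in particular, in any 2-coloring of the slanting rain of length 5 whose base is monochromatic, there is a monochromatic standard triangle of area 1/2. -/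
/-!
Every layer point `(x₀ + κb, y₀ + 1/(kb))` is the apex of the standard triangle with base
vertices `(x₀ + κb, y₀)` and `(x₀ + (κ + k)b, y₀)`, so a layer point of the base's color closes a
monochromatic triangle on the base. Otherwise every layer point has the other color, and the
layer points `(x₀, y₀ + 1/(2b))`, `(x₀ + 2b, y₀ + 1/(2b))`, `(x₀, y₀ + 1/b)` form a standard
triangle with legs `2b` and `1/(2b)`.
-/

lemma Fin.two_eq_of_ne_of_ne {i j k : Fin 2} (hi : i ≠ k) (hj : j ≠ k) : i = j := by
  omega

section

variable {x₀ y₀ b : ℚ} {ℓ : ℕ}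

lemma exists_triangle_on_rainBase_of_mem_rainLayers (hb : 0 < b) {p : ℚ × ℚ}
    (hp : p ∈ rainLayers x₀ y₀ b ℓ) :
    ∃ x y a c : ℚ, 0 < a ∧ 0 < c ∧ a * c = 1 ∧
      (x, y) ∈ rainBase x₀ y₀ b ℓ ∧ (x + c, y) ∈ rainBase x₀ y₀ b ℓ ∧ (x, y + a) = p := by
  obtain ⟨k, κ, hk, hkℓ, hκ, rfl⟩ := hp
  have hkb : 0 < (k : ℚ) * b := mul_pos (by exact_mod_cast hk) hb
  refine ⟨x₀ + κ * b, y₀, 1 / (k * b), k * b, by positivity, hkb, one_div_mul_cancel hkb.ne',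
    ⟨κ, by omega, rfl⟩, ⟨κ + k, by omega, Prod.ext (by push_cast; ring) rfl⟩, rfl⟩

lemma triangle_mem_rainLayers (hℓ : 5 ≤ ℓ) :
    (x₀, y₀ + 1 / (2 * b)) ∈ rainLayers x₀ y₀ b ℓ ∧
      (x₀ + 2 * b, y₀ + 1 / (2 * b)) ∈ rainLayers x₀ y₀ b ℓ ∧
      (x₀, y₀ + 1 / (2 * b) + 1 / (2 * b)) ∈ rainLayers x₀ y₀ b ℓ := by
  refine ⟨⟨2, 0, by omega, by omega, by omega, ?_⟩, ⟨2, 2, by omega, by omega, by omega, ?_⟩,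
    ⟨1, 0, le_rfl, by omega, by omega, ?_⟩⟩ <;>
  · ext <;> push_cast <;> ring

end

/-- In a slanting rain of length 5 whose base is monochromatic under a 2-coloring, either some
layer point has the base's color, or among the layer points at heights `1/b` and `1/(2b)` there
is a standard triangle of area `1/2` all of whose vertices have the other color. In particular
there is always a monochromatic standard triangle of area `1/2`. -/
theorem rain5_mono_triangle (x₀ y₀ b : ℚ) (hb : 0 < b) (χ : ℚ × ℚ → Fin 2) (c₀ : Fin 2)
    (hbase : ∀ κ : ℕ, κ ≤ 4 → χ (x₀ + κ * b, y₀) = c₀) :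
    ((∃ p ∈ rainLayers x₀ y₀ b 5, χ p = c₀) ∨
      ∃ x y a c : ℚ, 0 < a ∧ 0 < c ∧ a * c = 1 ∧
        (x, y) ∈ rainLayers x₀ y₀ b 5 ∧ (x + c, y) ∈ rainLayers x₀ y₀ b 5 ∧
        (x, y + a) ∈ rainLayers x₀ y₀ b 5 ∧
        (y = y₀ + 1 / b ∨ y = y₀ + 1 / (2 * b)) ∧
        (y + a = y₀ + 1 / b ∨ y + a = y₀ + 1 / (2 * b)) ∧
        χ (x, y) ≠ c₀ ∧ χ (x, y) = χ (x + c, y) ∧ χ (x, y) = χ (x, y + a)) ∧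
    ∃ x y a c : ℚ, 0 < a ∧ 0 < c ∧ a * c = 1 ∧
      (x, y) ∈ rainBase x₀ y₀ b 5 ∪ rainLayers x₀ y₀ b 5 ∧
      (x + c, y) ∈ rainBase x₀ y₀ b 5 ∪ rainLayers x₀ y₀ b 5 ∧
      (x, y + a) ∈ rainBase x₀ y₀ b 5 ∪ rainLayers x₀ y₀ b 5 ∧
      χ (x, y) = χ (x + c, y) ∧ χ (x, y) = χ (x, y + a) := by
  have hbase' : ∀ q ∈ rainBase x₀ y₀ b 5, χ q = c₀ := by
    rintro _ ⟨κ, hκ, rfl⟩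
    exact hbase κ hκ
  by_cases hlayer : ∃ p ∈ rainLayers x₀ y₀ b 5, χ p = c₀
  · obtain ⟨p, hp, hχp⟩ := hlayer
    obtain ⟨x, y, a, c, ha, hc, hac, h₁, h₂, rfl⟩ :=
      exists_triangle_on_rainBase_of_mem_rainLayers hb hp
    exact ⟨Or.inl ⟨_, hp, hχp⟩, x, y, a, c, ha, hc, hac, Or.inl h₁, Or.inl h₂, Or.inr hp,
      by rw [hbase' _ h₁, hbase' _ h₂], by rw [hbase' _ h₁, hχp]⟩
  · push Not at hlayer
    obtain ⟨h₁, h₂, h₃⟩ := triangle_mem_rainLayers (x₀ := x₀) (y₀ := y₀) (b := b) le_rfl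
    have ha : 0 < 1 / (2 * b) := by positivity
    have hc : 0 < 2 * b := by positivity
    have hac : 1 / (2 * b) * (2 * b) = 1 := one_div_mul_cancel hc.ne'
    have hχ₂ := Fin.two_eq_of_ne_of_ne (hlayer _ h₁) (hlayer _ h₂)
    have hχ₃ := Fin.two_eq_of_ne_of_ne (hlayer _ h₁) (hlayer _ h₃)
    exact ⟨Or.inr ⟨_, _, _, _, ha, hc, hac, h₁, h₂, h₃, Or.inr rfl, Or.inl (by ring),
      hlayer _ h₁, hχ₂, hχ₃⟩, _, _, _, _, ha, hc, hac, Or.inr h₁, Or.inr h₂, Or.inr h₃, hχ₂, hχ₃⟩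
end

section
/- For any coloring of ℚ² with finitely many colors, there exists a monochromatic standard triangle of area 1/2, i.e., three points (x₀,y₀), (x₀+c,y₀), (x₀,y₀+a) with a,c ∈ ℚ, a,c > 0, ac = 1, all of the same color. -/
/-!
Induction on the number of colours. By compactness, `n + 1` colours already force a monochromatic
standard triangle inside some finite set `F`; let `m` lie below all second coordinates of `F`.
The squeeze maps `(x, y) ↦ (t x + b, (y - m) / t)`, `t > 0`, send standard triangles to standard
triangles. Given an `(n + 2)`-colouring, Gallai's theorem on the line `y = 0` yields such a map
under which the feet `(t x + b, 0)` and `(t (x + 1 / (y - m)) + b, 0)` of all `(x, y) ∈ F` share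
one colour `k`. If the image of some point of `F` has colour `k`, it closes a monochromatic
standard triangle with its two feet; otherwise the image of `F` sees only `n + 1` colours and so
contains one.
-/

open Filter Finset

section Monochromatic

variable {X κ : Type*}

def IsMonochromatic (χ : X → κ) (T : Finset X) : Prop :=
  ∀ x ∈ T, ∀ y ∈ T, χ x = χ y

theorem IsMonochromatic.of_comp {ι : Type*} {χ : X → κ} {g : κ → ι} {T : Finset X}
    (h : IsMonochromatic (g ∘ χ) T) (hg : Set.InjOn g (χ '' T)) : IsMonochromatic χ T :=
  fun x hx y hy => hg ⟨x, hx, rfl⟩ ⟨y, hy, rfl⟩ (h x hx y hy)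

theorem isMonochromatic_image {Y : Type*} [DecidableEq X] {χ : X → κ} {φ : Y → X}
    {T : Finset Y} : IsMonochromatic χ (T.image φ) ↔ IsMonochromatic (χ ∘ φ) T := by
  simp only [IsMonochromatic, forall_mem_image, Function.comp_apply]

theorem exists_finset_forall_exists_isMonochromatic [Finite κ] (𝒯 : Set (Finset X))
    (H : ∀ χ : X → κ, ∃ T ∈ 𝒯, IsMonochromatic χ T) :
    ∃ F : Finset X, ∀ χ : X → κ, ∃ T ∈ 𝒯, T ⊆ F ∧ IsMonochromatic χ T := by
  by_contra! hbad
  choose f hf using hbad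
  let U : Ultrafilter (Finset X) := .of atTop
  have hlim (x : X) : ∃ k, ∀ᶠ F in U, f F x = k :=
    Ultrafilter.eventually_exists_iff.1 (.of_forall fun F => ⟨f F x, rfl⟩)
  -- `g` is the limit along `U` of colourings `f F` without monochromatic members of `𝒯` in `F`
  choose g hg using hlim
  obtain ⟨T, hT, hmono⟩ := H g
  have hfar : ∀ᶠ F in U, T ⊆ F ∧ ∀ x ∈ T, f F x = g x :=
    ((eventually_ge_atTop T).filter_mono (Ultrafilter.of_le atTop)).and
      ((eventually_all_finset T).2 fun x _ => hg x)
  obtain ⟨F, hTF, hFg⟩ := hfar.exists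
  refine hf F T hT hTF fun x hx y hy => ?_
  rw [hFg x hx, hFg y hy]
  exact hmono x hx y hy

end Monochromatic

theorem Fin.exists_injOn_compl_singleton {n : ℕ} (k : Fin (n + 2)) :
    ∃ g : Fin (n + 2) → Fin (n + 1), Set.InjOn g {k}ᶜ := by
  refine ⟨fun j => (finSuccEquiv' k j).getD 0, fun i hi j hj hij => ?_⟩
  have hsome {j} (hj : j ≠ k) : some ((finSuccEquiv' k j).getD 0) = finSuccEquiv' k j :=
    Option.getD_of_ne_none (by rwa [Ne, ← finSuccEquiv'_at k, (finSuccEquiv' k).apply_eq_iff_eq]) 0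
  exact (finSuccEquiv' k).injective (by rw [← hsome hi, ← hsome hj]; exact congrArg some hij)

section StdTriangle

variable {K : Type*} [Field K] [LinearOrder K]

def stdTriangle (x y a c : K) : Finset (K × K) := {(x, y), (x + c, y), (x, y + a)}

def stdTriangles : Set (Finset (K × K)) :=
  {T | ∃ x y a c : K, 0 < a ∧ 0 < c ∧ a * c = 1 ∧ stdTriangle x y a c = T}

theorem isMonochromatic_stdTriangle {κ : Type*} {χ : K × K → κ} {x y a c : K} :
    IsMonochromatic χ (stdTriangle x y a c) ↔
      χ (x, y) = χ (x + c, y) ∧ χ (x, y) = χ (x, y + a) := by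
  refine ⟨fun h => ⟨h _ (by simp [stdTriangle]) _ (by simp [stdTriangle]),
    h _ (by simp [stdTriangle]) _ (by simp [stdTriangle])⟩, fun ⟨h₁, h₂⟩ => ?_⟩
  simp only [IsMonochromatic, stdTriangle, mem_insert, mem_singleton]
  rintro p (rfl | rfl | rfl) q (rfl | rfl | rfl) <;> grind

def squeeze (t b m : K) (p : K × K) : K × K := (t * p.1 + b, (p.2 - m) / t)

theorem image_squeeze_stdTriangle {t : K} (ht : t ≠ 0) (b m x y a c : K) :
    (stdTriangle x y a c).image (squeeze t b m) =
      stdTriangle (t * x + b) ((y - m) / t) (a / t) (t * c) := by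
  simp only [stdTriangle, image_insert, image_singleton, squeeze]
  congr 2 <;> simp only [Prod.mk.injEq, true_and, and_true, singleton_inj] <;> field_simp <;> ring

variable [IsStrictOrderedRing K]

theorem image_squeeze_mem_stdTriangles {t : K} (ht : 0 < t) (b m : K) {T : Finset (K × K)}
    (hT : T ∈ stdTriangles) : T.image (squeeze t b m) ∈ stdTriangles := by
  obtain ⟨x, y, a, c, ha, hc, hac, rfl⟩ := hT
  refine ⟨_, _, a / t, t * c, by positivity, by positivity, ?_,
    (image_squeeze_stdTriangle ht.ne' b m x y a c).symm⟩
  field_simp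
  linear_combination hac

/-- `hβ` says that `β` has at most one colour more than `α`. -/
theorem exists_isMonochromatic_stdTriangle_of_forcing {α β : Type*} [Finite β]
    (hβ : ∀ k : β, ∃ g : β → α, Set.InjOn g {k}ᶜ) {F : Finset (K × K)}
    (hF : ∀ ψ : K × K → α, ∃ T ∈ stdTriangles, T ⊆ F ∧ IsMonochromatic ψ T)
    (χ : K × K → β) : ∃ T ∈ stdTriangles, IsMonochromatic χ T := by
  obtain ⟨M, hM⟩ := (F.image Prod.snd).bddBelow
  obtain ⟨m, hm⟩ : ∃ m, ∀ p ∈ F, m < p.2 :=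
    ⟨M - 1, fun p hp => by linarith [hM (mem_image_of_mem Prod.snd hp)]⟩
  obtain ⟨t, ht, b, k, hk⟩ := Combinatorics.exists_mono_homothetic_copy
    (F.image Prod.fst ∪ F.image fun p => p.1 + (p.2 - m)⁻¹) fun q => χ (q, 0)
  have ht' : (0 : K) < t := by exact_mod_cast ht
  set φ := squeeze (t : K) b m
  by_cases hapex : ∃ p ∈ F, χ (φ p) = k
  · obtain ⟨p, hp, hpk⟩ := hapex
    have hp₂ : 0 < p.2 - m := sub_pos.2 (hm p hp)
    have hfoot₁ := hk p.1 (mem_union_left _ (mem_image_of_mem _ hp))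
    have hfoot₂ := hk _ (mem_union_right _ (mem_image_of_mem _ hp))
    simp only [nsmul_eq_mul] at hfoot₁ hfoot₂
    refine ⟨stdTriangle (t * p.1 + b) 0 ((p.2 - m) / t) (t / (p.2 - m)),
      ⟨_, _, _, _, by positivity, by positivity, by field_simp, rfl⟩,
      isMonochromatic_stdTriangle.2 ⟨?_, ?_⟩⟩
    · rw [hfoot₁, ← hfoot₂, mul_add, div_eq_mul_inv, add_right_comm]
    · rw [hfoot₁, zero_add, ← hpk]
      rfl
  · push Not at hapex
    obtain ⟨g, hg⟩ := hβ k
    obtain ⟨T, hT, hTF, hmono⟩ := hF (g ∘ χ ∘ φ)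
    refine ⟨T.image φ, image_squeeze_mem_stdTriangles ht' b _ hT,
      isMonochromatic_image.2 (hmono.of_comp (hg.mono ?_))⟩
    rintro _ ⟨p, hp, rfl⟩
    exact hapex p (hTF hp)

theorem exists_isMonochromatic_stdTriangle (n : ℕ) (χ : K × K → Fin (n + 1)) :
    ∃ T ∈ stdTriangles, IsMonochromatic χ T := by
  induction n with
  | zero =>
    exact ⟨stdTriangle 0 0 1 1, ⟨0, 0, 1, 1, one_pos, one_pos, one_mul 1, rfl⟩,
      fun _ _ _ _ => Subsingleton.elim (α := Fin 1) _ _⟩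
  | succ n ih =>
    obtain ⟨F, hF⟩ := exists_finset_forall_exists_isMonochromatic _ ih
    exact exists_isMonochromatic_stdTriangle_of_forcing Fin.exists_injOn_compl_singleton hF χ

end StdTriangle

theorem mono_standard_triangle_general (h : ℕ) (χ : ℚ × ℚ → Fin h) :
    ∃ x y a c : ℚ, 0 < a ∧ 0 < c ∧ a * c = 1 ∧
      χ (x, y) = χ (x + c, y) ∧ χ (x, y) = χ (x, y + a) := by
  obtain _ | n := h
  · exact (χ 0).elim0
  obtain ⟨_, ⟨x, y, a, c, ha, hc, hac, rfl⟩, hmono⟩ := exists_isMonochromatic_stdTriangle n χ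
  exact ⟨x, y, a, c, ha, hc, hac, isMonochromatic_stdTriangle.1 hmono⟩

/-- Any finite coloring of `ℚ²` admits a monochromatic standard triangle of area `1/2`. -/
theorem mono_standard_triangle (h : ℕ) (hh : 1 ≤ h) (χ : ℚ × ℚ → Fin h) :
    ∃ x y a c : ℚ, 0 < a ∧ 0 < c ∧ a * c = 1 ∧
      χ (x, y) = χ (x + c, y) ∧ χ (x, y) = χ (x, y + a) :=
  mono_standard_triangle_general h χ
end

section
/- Let ℓ ≥ 2, n ≥ 2, and s = ((ℓ−1)^{n−1}+1)!. Then for every w ∈ {1, 2, …, (ℓ−1)^{n−1}}, the quantity 1/s^{n−1} + 1/(w·s^{n−1}) equals 1/W for some natural number W with 1 ≤ W ≤ (L−1)^{n−1}, where L = ((ℓ−1)^{n−1}+1)!·ℓ + 1. -/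
theorem one_div_add_one_div_mul_eq_one_div_div {K : Type*} [Field K] [CharZero K] {w a : ℕ}
    (hw : w ≠ 0) (h : w + 1 ∣ a) :
    (1 : K) / a + 1 / (w * a) = 1 / ((w * a / (w + 1) : ℕ) : K) := by
  rw [Nat.cast_div (dvd_mul_of_dvd_right h w) (Nat.cast_ne_zero.mpr w.succ_ne_zero)]
  push_cast
  rcases eq_or_ne (a : K) 0 with ha | ha
  · simp [ha]
  · field_simp

theorem exists_one_div_add_one_div_mul_eq_one_div {w a : ℕ} (hw : w ≠ 0) (ha : a ≠ 0)
    (h : w + 1 ∣ a) :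
    ∃ W : ℕ, 1 ≤ W ∧ W ≤ w * a ∧ (1 : ℚ) / a + 1 / (w * a) = 1 / W := by
  refine ⟨w * a / (w + 1), ?_, Nat.div_le_self _ _, one_div_add_one_div_mul_eq_one_div_div hw h⟩
  exact Nat.div_pos (Nat.le_of_dvd (by positivity) (dvd_mul_of_dvd_right h w)) (by omega)

theorem layer_height_unit_fraction_general (ℓ n : ℕ) (hn : 2 ≤ n)
    (w : ℕ) (hw1 : 1 ≤ w) (hw2 : w ≤ (ℓ - 1) ^ (n - 1)) :
    ∃ W : ℕ, 1 ≤ W ∧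
      W ≤ ((((ℓ - 1) ^ (n - 1) + 1).factorial * ℓ + 1) - 1) ^ (n - 1) ∧
      (1 : ℚ) / ((((ℓ - 1) ^ (n - 1) + 1).factorial : ℚ) ^ (n - 1)) +
        1 / (w * (((ℓ - 1) ^ (n - 1) + 1).factorial : ℚ) ^ (n - 1)) = 1 / W := by
  set s := ((ℓ - 1) ^ (n - 1) + 1).factorial
  -- `w + 1 ≤ (ℓ - 1) ^ (n - 1) + 1` divides `s`, and `n - 1 ≥ 1`.
  have hdvd : w + 1 ∣ s ^ (n - 1) :=
    (Nat.dvd_factorial (by omega) (by omega)).trans (dvd_pow_self s (by omega))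
  obtain ⟨W, hW1, hWle, hWeq⟩ :=
    exists_one_div_add_one_div_mul_eq_one_div (by omega)
      (pow_ne_zero _ (Nat.factorial_ne_zero _)) hdvd
  refine ⟨W, hW1, ?_, by exact_mod_cast hWeq⟩
  calc W ≤ w * s ^ (n - 1) := hWle
    _ ≤ (ℓ - 1) ^ (n - 1) * s ^ (n - 1) := Nat.mul_le_mul_right _ hw2
    _ ≤ ℓ ^ (n - 1) * s ^ (n - 1) := by gcongr; omega
    _ = (s * ℓ + 1 - 1) ^ (n - 1) := by rw [Nat.add_sub_cancel, mul_pow, mul_comm]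

/-- With `s = ((ℓ-1)^(n-1) + 1)!` and `L = s·ℓ + 1`, for every `w ∈ {1, …, (ℓ-1)^(n-1)}` the
rational `1/s^(n-1) + 1/(w·s^(n-1))` equals `1/W` for some natural `1 ≤ W ≤ (L-1)^(n-1)`. -/
theorem layer_height_unit_fraction (ℓ n : ℕ) (hℓ : 2 ≤ ℓ) (hn : 2 ≤ n)
    (w : ℕ) (hw1 : 1 ≤ w) (hw2 : w ≤ (ℓ - 1) ^ (n - 1)) :
    ∃ W : ℕ, 1 ≤ W ∧
      W ≤ ((((ℓ - 1) ^ (n - 1) + 1).factorial * ℓ + 1) - 1) ^ (n - 1) ∧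
      (1 : ℚ) / ((((ℓ - 1) ^ (n - 1) + 1).factorial : ℚ) ^ (n - 1)) +
        1 / (w * (((ℓ - 1) ^ (n - 1) + 1).factorial : ℚ) ^ (n - 1)) = 1 / W :=
  layer_height_unit_fraction_general ℓ n hn w hw1 hw2
end

section
/- Define the n-dimensional slanting rain of length ℓ with step (s₂,…,s_n) ∈ ℚ^{n−1} (all coordinates positive) and origin (x₀,…,z₀) ∈ ℚⁿ: its base is the (n−1)-dimensional grid {(x₀, y₀+κ₂s₂, …, z₀+κ_n s_n) : 0 ≤ κ_i ≤ ℓ−1}, and its layers consist of all points (x₀ + 1/(w·s₂⋯s_n), y₀+κ₂s₂, …, z₀+κ_n s_n) with 1 ≤ w ≤ (ℓ−1)^{n−1} and (ℓ−1−κ₂)⋯(ℓ−1−κ_n) ≥ w. Then for L = ((ℓ−1)^{n−1}+1)!·ℓ + 1, the layers of every n-dimensional slanting rain of length L contain, as a subset, an n-dimensional slanting rain of length ℓ. -/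
open Finset

/-- The base of the `(m+1)`-dimensional slanting rain of length `ℓ` with step `s : Fin m → ℚ`
and origin `(x₀, y₀)`: an `m`-dimensional grid in the hyperplane `x = x₀`. -/
def ndRainBase (m ℓ : ℕ) (x₀ : ℚ) (y₀ s : Fin m → ℚ) : Set (ℚ × (Fin m → ℚ)) :=
  {p | ∃ κ : Fin m → ℕ, (∀ i, κ i ≤ ℓ - 1) ∧
    p = (x₀, fun i => y₀ i + (κ i : ℚ) * s i)}

/-- The layers of the `(m+1)`-dimensional slanting rain: all apexes of standard simplices of
volume `1/(m+1)!·(m+1)`... precisely the points `(x₀ + 1/(w·∏ s_i), y₀ + κ·s)` with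
`1 ≤ w ≤ (ℓ-1)^m` and `∏ (ℓ-1-κ_i) ≥ w`. -/
def ndRainLayers (m ℓ : ℕ) (x₀ : ℚ) (y₀ s : Fin m → ℚ) : Set (ℚ × (Fin m → ℚ)) :=
  {p | ∃ (w : ℕ) (κ : Fin m → ℕ), 1 ≤ w ∧ w ≤ (ℓ - 1) ^ m ∧ (∀ i, κ i ≤ ℓ - 1) ∧
    w ≤ ∏ i, (ℓ - 1 - κ i) ∧
    p = (x₀ + 1 / ((w : ℚ) * ∏ i, s i), fun i => y₀ i + (κ i : ℚ) * s i)}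

/-!
With `F = ((ℓ-1)^(n-1)+1)!`, the sub-rain has origin `(x₀ + 1/(F·∏ s), y₀)` and steps `t_i·s_i`
with `∏ t_i = F` (here `t = (F, 1, …, 1)`). Its grid point `κ` is the grid point `κ_i t_i` of the big
rain, and `κ_i t_i ≤ (ℓ-1)F` leaves a margin of at least `t_i` in every coordinate, so the margin
product is at least `∏ t_i = F`. A base point is then the big layer `w = F`, and the layer `w` of the
sub-rain lies at height `1/(F·∏ s) + 1/(w·F·∏ s) = 1/(w·d·∏ s)` with `d = F/(w+1)`, an integer since
`w + 1 ≤ (ℓ-1)^(n-1) + 1`.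
-/

theorem one_div_add_one_div_mul_eq {K : Type*} [Field K] {w : K} (d P : K) (hw : w ≠ 0)
    (hw₁ : w + 1 ≠ 0) :
    1 / ((w + 1) * d * P) + 1 / (w * ((w + 1) * d * P)) = 1 / (w * d * P) := by
  rcases eq_or_ne d 0 with rfl | hd
  · simp
  rcases eq_or_ne P 0 with rfl | hP
  · simp
  field_simp

section SlantingRain

variable {m ℓ F : ℕ} {x₀ : ℚ} {y₀ s : Fin m → ℚ} {t : Fin m → ℕ}

theorem mem_ndRainLayers_of_le {w : ℕ} {κ : Fin m → ℕ} (hℓ : 1 ≤ ℓ) (ht : ∏ i, t i = F)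
    (hκ : ∀ i, κ i ≤ ℓ - 1) (hw : 1 ≤ w) (hwF : w ≤ F) :
    (x₀ + 1 / ((w : ℚ) * ∏ i, s i), fun i => y₀ i + ((κ i * t i : ℕ) : ℚ) * s i) ∈
      ndRainLayers m (F * ℓ + 1) x₀ y₀ s := by
  have htF : ∀ i, t i ≤ F := fun i =>
    Nat.le_of_dvd (by omega) (ht ▸ dvd_prod_of_mem t (mem_univ i))
  have hcol : ∀ i, κ i * t i + t i ≤ F * ℓ := fun i => by
    have := Nat.mul_le_mul (show κ i + 1 ≤ ℓ by have := hκ i; omega) (htF i)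
    linarith
  refine ⟨w, fun i => κ i * t i, hw, ?_, fun i => ?_, ?_, rfl⟩ <;> rw [Nat.add_sub_cancel]
  · calc w ≤ ∏ i, t i := ht ▸ hwF
      _ ≤ ∏ _i : Fin m, F * ℓ := prod_le_prod' fun i _ => by have := hcol i; omega
      _ = (F * ℓ) ^ m := by simp
  · have := hcol i; dsimp only; omega
  · calc w ≤ ∏ i, t i := ht ▸ hwF
      _ ≤ ∏ i, (F * ℓ - κ i * t i) := prod_le_prod' fun i _ => by have := hcol i; omega

theorem ndRainBase_subset_ndRainLayers (hℓ : 1 ≤ ℓ) (ht : ∏ i, t i = F) (hF : 0 < F) :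
    ndRainBase m ℓ (x₀ + 1 / (F * ∏ i, s i)) y₀ (fun i => t i * s i) ⊆
      ndRainLayers m (F * ℓ + 1) x₀ y₀ s := by
  rintro _ ⟨κ, hκ, rfl⟩
  convert mem_ndRainLayers_of_le (y₀ := y₀) hℓ ht hκ hF le_rfl using 2
  ext i
  push_cast
  ring

theorem ndRainLayers_subset_ndRainLayers (hℓ : 1 ≤ ℓ) (ht : ∏ i, t i = F) (hF : 0 < F)
    (hdvd : ∀ w ≤ (ℓ - 1) ^ m, w + 1 ∣ F) :
    ndRainLayers m ℓ (x₀ + 1 / (F * ∏ i, s i)) y₀ (fun i => t i * s i) ⊆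
      ndRainLayers m (F * ℓ + 1) x₀ y₀ s := by
  rintro _ ⟨w, κ, hw, hwM, hκ, -, rfl⟩
  obtain ⟨d, hd⟩ := hdvd w hwM
  have hd₀ : 0 < d := Nat.pos_of_mul_pos_left (hd ▸ hF)
  have hwd : w * d ≤ F := hd ▸ Nat.mul_le_mul_right d (Nat.le_succ w)
  convert mem_ndRainLayers_of_le (y₀ := y₀) hℓ ht hκ (Nat.mul_pos hw hd₀) hwd using 2
  · rw [prod_mul_distrib, ← Nat.cast_prod, ht, add_assoc, hd]
    push_cast
    exact congrArg (x₀ + ·)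
      (one_div_add_one_div_mul_eq (w := (w : ℚ)) _ _ (by positivity) (by positivity))
  · ext i
    push_cast
    ring

end SlantingRain

/-- The layers of every `n`-dimensional slanting rain of length `L = ((ℓ-1)^(n-1)+1)!·ℓ + 1`
contain an `n`-dimensional slanting rain of length `ℓ`. -/
theorem ndSubRain_exists (n ℓ : ℕ) (hn : 2 ≤ n) (hℓ : 2 ≤ ℓ)
    (x₀ : ℚ) (y₀ s : Fin (n - 1) → ℚ) (hs : ∀ i, 0 < s i) :
    ∃ (x₀' : ℚ) (y₀' s' : Fin (n - 1) → ℚ), (∀ i, 0 < s' i) ∧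
      ndRainBase (n - 1) ℓ x₀' y₀' s' ∪ ndRainLayers (n - 1) ℓ x₀' y₀' s' ⊆
        ndRainLayers (n - 1) (((ℓ - 1) ^ (n - 1) + 1).factorial * ℓ + 1) x₀ y₀ s := by
  set F := ((ℓ - 1) ^ (n - 1) + 1).factorial
  have hF : 0 < F := Nat.factorial_pos _
  set t : Fin (n - 1) → ℕ := Pi.mulSingle ⟨0, by omega⟩ F
  have ht : ∏ i, t i = F := Fintype.prod_pi_mulSingle' _ _
  have hdvd : ∀ w ≤ (ℓ - 1) ^ (n - 1), w + 1 ∣ F :=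
    fun w hw => Nat.dvd_factorial (Nat.succ_pos w) (Nat.succ_le_succ hw)
  refine ⟨x₀ + 1 / (F * ∏ i, s i), y₀, fun i => t i * s i, fun i => ?_,
    Set.union_subset (ndRainBase_subset_ndRainLayers (by omega) ht hF)
      (ndRainLayers_subset_ndRainLayers (by omega) ht hF hdvd)⟩
  have ht₀ : t i ≠ 0 := prod_ne_zero_iff.mp (ht ▸ hF.ne') i (mem_univ i)
  exact mul_pos (by exact_mod_cast Nat.pos_of_ne_zero ht₀) (hs i)
end

section
/- For any finite coloring of ℚⁿ (n ≥ 2) and any positive rational V, there exists a monochromatic standard simplex of volume V, i.e., n+1 points (x₀,…,z₀), (x₀+a₁,y₀,…,z₀), (x₀,y₀+a₂,…,z₀), …, (x₀,…,z₀+a_n) with all a_i ∈ ℚ positive and (a₁⋯a_n)/n! = V, all of the same color. -/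
/-!
Write `ℚⁿ = ℚᵏ × ℚ` with `k = n - 1 ≥ 1`. By induction on `r` we build finite grids `P ⊆ ℚᵏ`,
`Y ⊆ ℚ₊` such that every placement `(x₀ + d • P) × (y₀ + ν • Y)` with `dᵏ ν = c` on which at most
`r` colours occur contains a monochromatic simplex whose sides have product `c`.

For the step, a bounded form of Gallai's theorem (from Hales–Jewett) gives, in the row `y₀ + ν`,
a monochromatic homothetic copy `a • S + b` of `S = P + E`, where `E` consists of `0` and the
edges of the boxes with sides `(t⁻¹, 1, …, 1)`, `t ∈ Y`. If some point at height `ν t / aᵏ` above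
a vertex of `a • P + b` has the row's colour `c₀`, it is the apex of a monochromatic simplex with
sides `d a (t⁻¹, 1, …, 1)` and `ν t / aᵏ`, of product `dᵏ ν = c`. Otherwise `a • P + b` at the
heights `y₀ + ν + (ν / aᵏ) • Y` is a placement of the old grid at scale `(d a, ν / aᵏ)` that
avoids `c₀`, and the induction hypothesis applies.
-/

open Finset Pointwise

theorem Combinatorics.exists_mono_homothetic_copy_mem_nsmul {M : Type*} [AddCommMonoid M]
    [DecidableEq M] (S : Finset M) (κ : Type*) [Finite κ] :
    ∃ N : ℕ, ∀ C : M → κ, ∃ a, 0 < a ∧ a ≤ N ∧ ∃ (b : M) (c : κ),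
      ∀ s ∈ S, a • s + b ∈ N • S ∧ C (a • s + b) = c := by
  classical
  obtain ⟨ι, _, hι⟩ := Line.exists_mono_in_high_dimension S κ
  refine ⟨Fintype.card ι, fun C => ?_⟩
  obtain ⟨l, c, hl⟩ := hι fun v => C (∑ i, v i)
  set a := #{i | l.idxFun i = none}
  have hline : ∀ x : S, ∑ i, (l x i : M) = a • (x : M) + ∑ i, (l.idxFun i).elim 0 (↑) := by
    intro x
    have hcoord : ∀ i, (l x i : M) = (if l.idxFun i = none then (x : M) else 0) +
        (l.idxFun i).elim 0 (↑) := by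
      intro i
      cases h : l.idxFun i <;> simp [h]
    rw [sum_congr rfl fun i _ => hcoord i, sum_add_distrib, ← sum_filter, sum_const]
  refine ⟨a, card_pos.mpr ⟨l.proper.choose, by simpa using l.proper.choose_spec⟩,
    card_filter_le _ _, ∑ i, (l.idxFun i).elim 0 (↑), c, fun s hs => ⟨?_, ?_⟩⟩
  · rw [← hline ⟨s, hs⟩, ← Fintype.sum_equiv (Fintype.equivFin ι).symm _ _ fun _ => rfl,
      ← mem_coe, coe_nsmul, Set.mem_nsmul_iff_sum]
    exact ⟨_, fun j => (l ⟨s, hs⟩ _).2, rfl⟩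
  · rw [← hline ⟨s, hs⟩]
    exact hl ⟨s, hs⟩

def HasMonoSimplex {n : ℕ} {κ : Type*} (χ : (Fin n → ℚ) → κ) (c : ℚ) : Prop :=
  ∃ v a : Fin n → ℚ, (∀ i, 0 < a i) ∧ ∏ i, a i = c ∧
    ∀ i, χ (Function.update v i (v i + a i)) = χ v

lemma Function.update_self_add_eq_add_single {ι M : Type*} [DecidableEq ι] [AddZeroClass M]
    (x : ι → M) (j : ι) (m : M) :
    Function.update x j (x j + m) = x + Pi.single j m := by
  ext i
  rcases eq_or_ne i j with rfl | h <;> simp [*]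

lemma hasMonoSimplex_snoc {k : ℕ} {κ : Type*} {χ : (Fin (k + 1) → ℚ) → κ} {x A : Fin k → ℚ}
    {y η : ℚ} (hA : ∀ j, 0 < A j) (hη : 0 < η)
    (hx : ∀ j, χ (Fin.snoc (x + Pi.single j (A j)) y) = χ (Fin.snoc x y))
    (hy : χ (Fin.snoc x (y + η)) = χ (Fin.snoc x y)) :
    HasMonoSimplex χ ((∏ j, A j) * η) := by
  refine ⟨Fin.snoc x y, Fin.snoc A η, Fin.lastCases (by simpa) (by simpa), by
    simp [Fin.prod_univ_castSucc], Fin.lastCases ?_ fun j => ?_⟩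
  · simpa [Fin.update_snoc_last] using hy
  · simpa [← Fin.snoc_update, Function.update_self_add_eq_add_single] using hx j

namespace MonoSimplex

variable {k : ℕ} {κ : Type*}

def Forces (χ : (Fin (k + 1) → ℚ) → κ) (c : ℚ) (r : ℕ) (P : Finset (Fin k → ℚ))
    (Y : Finset ℚ) : Prop :=
  ∀ (x₀ : Fin k → ℚ) (y₀ d ν : ℚ), 0 < d → 0 < ν → d ^ k * ν = c → ∀ Cs : Finset κ, #Cs ≤ r →
    (∀ p ∈ P, ∀ t ∈ Y, χ (Fin.snoc (x₀ + d • p) (y₀ + ν * t)) ∈ Cs) → HasMonoSimplex χ c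

lemma forces_zero (χ : (Fin (k + 1) → ℚ) → κ) (c : ℚ) : Forces χ c 0 {0} {1} := by
  intro x₀ y₀ d ν _ _ _ Cs hCs hgrid
  simpa [card_eq_zero.mp (Nat.le_zero.mp hCs)] using hgrid 0 (mem_singleton_self 0) 1

def rowOffsets (k N : ℕ) (Y : Finset ℚ) : Finset ℚ :=
  insert 1 ((Icc 1 N ×ˢ Y).image fun p => 1 + p.2 / (p.1 : ℚ) ^ k)

lemma one_mem_rowOffsets (N : ℕ) (Y : Finset ℚ) : 1 ∈ rowOffsets k N Y := mem_insert_self _ _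

lemma add_div_pow_mem_rowOffsets {N a : ℕ} {Y : Finset ℚ} {t : ℚ} (ha : 0 < a) (haN : a ≤ N)
    (ht : t ∈ Y) : 1 + t / (a : ℚ) ^ k ∈ rowOffsets k N Y :=
  mem_insert_of_mem (mem_image.2 ⟨(a, t), mem_product.2 ⟨mem_Icc.2 ⟨ha, haN⟩, ht⟩, rfl⟩)

lemma rowOffsets_pos {N : ℕ} {Y : Finset ℚ} (hY : ∀ t ∈ Y, 0 < t) :
    ∀ t ∈ rowOffsets k N Y, 0 < t := by
  simp only [rowOffsets, mem_insert, mem_image, mem_product, mem_Icc]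
  rintro _ (rfl | ⟨⟨a, t⟩, ⟨⟨ha, -⟩, ht⟩, rfl⟩)
  · exact one_pos
  · have := hY t ht
    positivity

variable [NeZero k]

def boxSides (t : ℚ) : Fin k → ℚ := Pi.mulSingle 0 t⁻¹

def edgeShifts (Y : Finset ℚ) : Finset (Fin k → ℚ) :=
  insert 0 ((univ ×ˢ Y).image fun jt => Pi.single jt.1 (boxSides jt.2 jt.1))

lemma boxSides_pos {t : ℚ} (ht : 0 < t) (j : Fin k) : 0 < boxSides t j := by
  rw [boxSides, Pi.mulSingle_apply]
  split_ifs <;> positivity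

lemma zero_mem_edgeShifts (Y : Finset ℚ) : (0 : Fin k → ℚ) ∈ edgeShifts Y := mem_insert_self _ _

lemma single_mem_edgeShifts {Y : Finset ℚ} {t : ℚ} (ht : t ∈ Y) (j : Fin k) :
    Pi.single j (boxSides t j) ∈ edgeShifts Y :=
  mem_insert_of_mem (mem_image.2 ⟨(j, t), mem_product.2 ⟨mem_univ j, ht⟩, rfl⟩)

variable {χ : (Fin (k + 1) → ℚ) → κ} {c : ℚ}

lemma hasMonoSimplex_of_edgeShifts {x : Fin k → ℚ} {y D ν t : ℚ} {Y : Finset ℚ} (hD : 0 < D)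
    (hν : 0 < ν) (hY : ∀ t ∈ Y, 0 < t) (ht : t ∈ Y)
    (hedge : ∀ e ∈ edgeShifts Y, χ (Fin.snoc (x + D • e) y) = χ (Fin.snoc x y))
    (hapex : χ (Fin.snoc x (y + ν * t)) = χ (Fin.snoc x y)) :
    HasMonoSimplex χ (D ^ k * ν) := by
  have ht' := hY t ht
  have hvol : (∏ j : Fin k, D * boxSides t j) * (ν * t) = D ^ k * ν := by
    rw [prod_mul_distrib, prod_const, card_univ, Fintype.card_fin, boxSides,
      Fintype.prod_pi_mulSingle']
    field_simp
  rw [← hvol]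
  refine hasMonoSimplex_snoc (fun j => mul_pos hD (boxSides_pos ht' j)) (by positivity)
    (fun j => ?_) hapex
  rw [← smul_eq_mul, Pi.single_smul]
  exact hedge _ (single_mem_edgeShifts ht j)

theorem Forces.exists_succ [Finite κ] {r : ℕ} {P : Finset (Fin k → ℚ)} {Y : Finset ℚ}
    (hP : P.Nonempty) (hY : ∀ t ∈ Y, 0 < t) (h : Forces χ c r P Y) :
    ∃ N, Forces χ c (r + 1) (N • (P + edgeShifts Y)) (rowOffsets k N Y) := by
  classical
  obtain ⟨N, hN⟩ := Combinatorics.exists_mono_homothetic_copy_mem_nsmul (P + edgeShifts Y) κ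
  refine ⟨N, fun x₀ y₀ d ν hd hν hc Cs hCs hgrid => ?_⟩
  obtain ⟨a, ha, haN, b, c₀, hrow⟩ := hN fun u => χ (Fin.snoc (x₀ + d • u) (y₀ + ν))
  have hbase : ∀ p ∈ P, a • p + b ∈ N • (P + edgeShifts Y) ∧
      χ (Fin.snoc (x₀ + d • (a • p + b)) (y₀ + ν)) = c₀ := fun p hp => by
    simpa using hrow (p + 0) (add_mem_add hp (zero_mem_edgeShifts Y))
  have hc₀ : c₀ ∈ Cs := by
    obtain ⟨p, hp⟩ := hP
    have := hgrid _ (hbase p hp).1 1 (one_mem_rowOffsets N Y)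
    rwa [mul_one, (hbase p hp).2] at this
  have hscale : (d * a) ^ k * (ν / a ^ k) = c := by
    rw [← hc]
    field_simp
    ring
  by_cases happ : ∃ p ∈ P, ∃ t ∈ Y,
      χ (Fin.snoc (x₀ + d • (a • p + b)) (y₀ + ν * (1 + t / a ^ k))) = c₀
  · obtain ⟨p, hp, t, ht, happ⟩ := happ
    rw [← hscale]
    refine hasMonoSimplex_of_edgeShifts (x := x₀ + d • (a • p + b)) (y := y₀ + ν)
      (by positivity) (by positivity) hY ht (fun e he => ?_) ?_
    · rw [(hbase p hp).2, ← (hrow _ (add_mem_add hp he)).2]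
      congr 2
      module
    · rw [(hbase p hp).2, ← happ]
      congr 2
      ring
  · push Not at happ
    refine h (x₀ + d • b) (y₀ + ν) (d * a) (ν / a ^ k) (by positivity) (by positivity)
      hscale (Cs.erase c₀) (by rw [card_erase_of_mem hc₀]; omega)
      fun p hp t ht => ?_
    have hpt : Fin.snoc (x₀ + d • b + (d * a) • p) (y₀ + ν + ν / a ^ k * t) =
        (Fin.snoc (x₀ + d • (a • p + b)) (y₀ + ν * (1 + t / a ^ k)) : Fin (k + 1) → ℚ) := by
      congr 1
      · module
      · ring
    rw [hpt]
    exact mem_erase.2 ⟨happ p hp t ht,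
      hgrid _ (hbase p hp).1 _ (add_div_pow_mem_rowOffsets ha haN ht)⟩

theorem exists_forces [Finite κ] (χ : (Fin (k + 1) → ℚ) → κ) (c : ℚ) (r : ℕ) :
    ∃ P Y, P.Nonempty ∧ (∀ t ∈ Y, 0 < t) ∧ Forces χ c r P Y := by
  induction r with
  | zero => exact ⟨{0}, {1}, singleton_nonempty 0, by simp, forces_zero χ c⟩
  | succ r ih =>
    obtain ⟨P, Y, hP, hY, h⟩ := ih
    obtain ⟨N, hN⟩ := h.exists_succ hP hY
    exact ⟨_, _, (hP.add ⟨0, zero_mem_edgeShifts Y⟩).nsmul, rowOffsets_pos hY, hN⟩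

end MonoSimplex

theorem hasMonoSimplex_of_fintype {k : ℕ} [NeZero k] {κ : Type*} [Fintype κ]
    (χ : (Fin (k + 1) → ℚ) → κ) {c : ℚ} (hc : 0 < c) : HasMonoSimplex χ c := by
  obtain ⟨P, Y, -, -, h⟩ := MonoSimplex.exists_forces χ c (Fintype.card κ)
  exact h 0 0 1 c one_pos hc (by simp) univ le_rfl fun _ _ _ _ => mem_univ _

theorem mono_standard_simplex_general (n : ℕ) (hn : 2 ≤ n) (h : ℕ)
    (χ : (Fin n → ℚ) → Fin h) (V : ℚ) (hV : 0 < V) :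
    ∃ (v : Fin n → ℚ) (a : Fin n → ℚ), (∀ i, 0 < a i) ∧
      (∏ i, a i) = (n.factorial : ℚ) * V ∧
      ∀ i, χ (Function.update v i (v i + a i)) = χ v := by
  obtain ⟨k, rfl⟩ : ∃ k, n = k + 1 := ⟨n - 1, by omega⟩
  have : NeZero k := ⟨by omega⟩
  exact hasMonoSimplex_of_fintype χ (by positivity)

/-- Any finite coloring of `ℚⁿ` admits a monochromatic standard simplex of any prescribed
positive rational volume `V`: there is a vertex `v` and positive side lengths `a i` with
`∏ a i = n! · V` such that `v` and all the points `v + a i • eᵢ` get the same color. -/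
theorem mono_standard_simplex (n : ℕ) (hn : 2 ≤ n) (h : ℕ) (hh : 1 ≤ h)
    (χ : (Fin n → ℚ) → Fin h) (V : ℚ) (hV : 0 < V) :
    ∃ (v : Fin n → ℚ) (a : Fin n → ℚ), (∀ i, 0 < a i) ∧
      (∏ i, a i) = (n.factorial : ℚ) * V ∧
      ∀ i, χ (Function.update v i (v i + a i)) = χ v :=
  mono_standard_simplex_general n hn h χ V hV
end

section
/- Two standard simplices in ℚⁿ lie in the same orbit under the group generated by rational translations and volume-preserving axis diagonal maps U^{k₁,…,k_n}_P : (x₁,…,x_n) ↦ (p₁+k₁(x₁−p₁), …, p_n+k_n(x_n−p_n)) with k_i ∈ ℚ, k_i > 0, k₁⋯k_n = 1, if and only if their volumes are equal. -/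
open Finset

/-- The generators of the group: rational translations and volume-preserving positive
diagonal affine maps. -/
def genMap (n : ℕ) (f : (Fin n → ℚ) → (Fin n → ℚ)) : Prop :=
  (∃ v : Fin n → ℚ, f = fun x => x + v) ∨
  (∃ p k : Fin n → ℚ, (∀ i, 0 < k i) ∧ (∏ i, k i) = 1 ∧
    f = fun x => fun i => p i + k i * (x i - p i))

/-- The standard simplex with origin `v` and side lengths `a`, as a set of `n + 1` vertices. -/
def stdSimplexSet (n : ℕ) (v a : Fin n → ℚ) : Set (Fin n → ℚ) :=
  insert v {q | ∃ i, q = Function.update v i (v i + a i)}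

/-!
Every generator, hence every group element, is a map `x ↦ w + K * x` with `K > 0` coordinatewise
and `∏ K = 1`. Such a map sends the standard simplex `(v, a)` to the standard simplex
`(w + K * v, K * a)`, and a standard simplex with positive side lengths determines its origin
(the coordinatewise minimum of its vertices) and its side lengths, so the product of the side
lengths is an invariant. Conversely, scaling about the origin by `a' / a` and then translating
carries `(v, a)` to `(v', a')`.
-/

section DiagAffine

variable {ι R : Type*} [CommRing R]

def diagAffine (w K : ι → R) (x : ι → R) : ι → R := w + K * x

theorem diagAffine_comp (w K w' K' : ι → R) :
    diagAffine w K ∘ diagAffine w' K' = diagAffine (w + K * w') (K * K') := by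
  funext x
  simp only [Function.comp_apply, diagAffine]
  ring

theorem diagAffine_update [DecidableEq ι] (w K x : ι → R) (i : ι) (c : R) :
    diagAffine w K (Function.update x i c) =
      Function.update (diagAffine w K x) i (w i + K i * c) := by
  funext j
  rcases eq_or_ne j i with rfl | hji
  · simp [diagAffine]
  · simp [diagAffine, Function.update_of_ne hji]

theorem add_right_eq_diagAffine (u : ι → R) : (fun x => x + u) = diagAffine u 1 := by
  funext x
  simp only [diagAffine]
  ring

theorem scale_eq_diagAffine (p k : ι → R) :
    (fun x i => p i + k i * (x i - p i)) = diagAffine (p - k * p) k := by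
  funext x i
  simp only [diagAffine, Pi.add_apply, Pi.sub_apply, Pi.mul_apply]
  ring

end DiagAffine

section

variable {n : ℕ}

theorem genMap.exists_eq_diagAffine {f : (Fin n → ℚ) → (Fin n → ℚ)} (hf : genMap n f) :
    ∃ w K : Fin n → ℚ, (∀ i, 0 < K i) ∧ ∏ i, K i = 1 ∧ f = diagAffine w K := by
  rcases hf with ⟨u, rfl⟩ | ⟨p, k, hk, hprod, rfl⟩
  · exact ⟨u, 1, fun _ => one_pos, prod_const_one, add_right_eq_diagAffine u⟩
  · exact ⟨p - k * p, k, hk, hprod, scale_eq_diagAffine p k⟩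

theorem exists_foldr_comp_eq_diagAffine {fs : List ((Fin n → ℚ) → (Fin n → ℚ))}
    (hfs : ∀ f ∈ fs, genMap n f) :
    ∃ w K : Fin n → ℚ, (∀ i, 0 < K i) ∧ ∏ i, K i = 1 ∧ fs.foldr (· ∘ ·) id = diagAffine w K := by
  induction fs with
  | nil =>
    refine ⟨0, 1, fun _ => one_pos, prod_const_one, ?_⟩
    funext x
    simp [diagAffine]
  | cons f fs ih =>
    obtain ⟨w, K, hK, hKprod, hfold⟩ := ih fun g hg => hfs g (List.mem_cons_of_mem _ hg)
    obtain ⟨w₀, K₀, hK₀, hK₀prod, rfl⟩ := (hfs f List.mem_cons_self).exists_eq_diagAffine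
    refine ⟨w₀ + K₀ * w, K₀ * K, fun i => mul_pos (hK₀ i) (hK i), ?_, ?_⟩
    · simp only [Pi.mul_apply, prod_mul_distrib, hK₀prod, hKprod, mul_one]
    · rw [List.foldr_cons, hfold, diagAffine_comp]

theorem stdSimplexSet_eq_insert_range (v a : Fin n → ℚ) :
    stdSimplexSet n v a = insert v (Set.range fun i => Function.update v i (v i + a i)) := by
  simp only [stdSimplexSet, Set.range, eq_comm]

theorem image_diagAffine_stdSimplexSet (w K v a : Fin n → ℚ) :
    diagAffine w K '' stdSimplexSet n v a = stdSimplexSet n (w + K * v) (K * a) := by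
  simp only [stdSimplexSet_eq_insert_range, Set.image_insert_eq, ← Set.range_comp,
    Function.comp_def, diagAffine_update]
  congr 2
  funext i
  congr 1
  simp only [Pi.add_apply, Pi.mul_apply]
  ring

theorem le_of_mem_stdSimplexSet {v a q : Fin n → ℚ} (ha : ∀ i, 0 ≤ a i)
    (hq : q ∈ stdSimplexSet n v a) : v ≤ q := by
  rcases hq with rfl | ⟨i, rfl⟩
  · exact le_rfl
  · intro j
    rcases eq_or_ne j i with rfl | hji
    · simpa using ha j
    · simp [Function.update_of_ne hji]

theorem stdSimplexSet_inj {v a v' a' : Fin n → ℚ} (ha : ∀ i, 0 < a i) (ha' : ∀ i, 0 ≤ a' i)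
    (h : stdSimplexSet n v a = stdSimplexSet n v' a') : v = v' ∧ a = a' := by
  have hv : v = v' := le_antisymm
    (le_of_mem_stdSimplexSet (fun i => (ha i).le) (h ▸ Set.mem_insert v' _))
    (le_of_mem_stdSimplexSet ha' (h ▸ Set.mem_insert v _))
  subst hv
  refine ⟨rfl, funext fun i => ?_⟩
  have hmem : Function.update v i (v i + a i) ∈ stdSimplexSet n v a' :=
    h ▸ Set.mem_insert_of_mem _ ⟨i, rfl⟩
  -- The vertex moved along axis `i` by `a i` must be moved along the same axis by `a' i`.
  rcases hmem with heq | ⟨j, heq⟩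
  · have := congrFun heq i
    simp only [Function.update_self] at this
    linarith [ha i]
  · have := congrFun heq i
    rcases eq_or_ne i j with rfl | hij
    · simpa using this
    · simp only [Function.update_self, Function.update_of_ne hij] at this
      linarith [ha i]

theorem image_add_right_comp_scale_stdSimplexSet {v a v' a' : Fin n → ℚ} (ha : ∀ i, a i ≠ 0) :
    ((· + (v' - v)) ∘ fun x i => v i + (a' / a) i * (x i - v i)) '' stdSimplexSet n v a =
      stdSimplexSet n v' a' := by
  rw [add_right_eq_diagAffine, scale_eq_diagAffine, diagAffine_comp,
    image_diagAffine_stdSimplexSet]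
  congr 1
  · ring
  · funext i
    simp [div_mul_cancel₀ _ (ha i)]

end

theorem stdSimplex_same_orbit_iff_general (n : ℕ)
    (v a v' a' : Fin n → ℚ) (ha : ∀ i, 0 < a i) (ha' : ∀ i, 0 < a' i) :
    (∃ fs : List ((Fin n → ℚ) → (Fin n → ℚ)), (∀ f ∈ fs, genMap n f) ∧
      (fs.foldr (· ∘ ·) id) '' stdSimplexSet n v a = stdSimplexSet n v' a') ↔
    (∏ i, a i) / (n.factorial : ℚ) = (∏ i, a' i) / (n.factorial : ℚ) := by
  rw [div_left_inj' (Nat.cast_ne_zero.mpr n.factorial_ne_zero)]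
  constructor
  · rintro ⟨fs, hfs, himage⟩
    obtain ⟨w, K, hK, hKprod, hfold⟩ := exists_foldr_comp_eq_diagAffine hfs
    rw [hfold, image_diagAffine_stdSimplexSet] at himage
    obtain ⟨-, rfl⟩ := stdSimplexSet_inj (fun i => mul_pos (hK i) (ha i)) (fun i => (ha' i).le) himage
    simp only [prod_mul_distrib, hKprod, one_mul]
  · intro hprod
    have hscale : genMap n fun x i => v i + (a' / a) i * (x i - v i) :=
      Or.inr ⟨v, a' / a, fun i => div_pos (ha' i) (ha i), by
        simp only [Pi.div_apply, prod_div_distrib, hprod,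
          div_self (prod_pos fun i _ => ha' i).ne'], rfl⟩
    exact ⟨[(· + (v' - v)), fun x i => v i + (a' / a) i * (x i - v i)],
      by simpa using ⟨Or.inl ⟨v' - v, rfl⟩, hscale⟩,
      image_add_right_comp_scale_stdSimplexSet fun i => (ha i).ne'⟩

/-- Two standard simplices lie in the same orbit under the group generated by rational
translations and volume-preserving positive diagonal maps iff their volumes are equal.
(Since the inverse of each generator is again a generator, group elements are exactly
finite compositions of generators.) -/
theorem stdSimplex_same_orbit_iff (n : ℕ) (hn : 2 ≤ n)
    (v a v' a' : Fin n → ℚ) (ha : ∀ i, 0 < a i) (ha' : ∀ i, 0 < a' i) :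
    (∃ fs : List ((Fin n → ℚ) → (Fin n → ℚ)), (∀ f ∈ fs, genMap n f) ∧
      (fs.foldr (· ∘ ·) id) '' stdSimplexSet n v a = stdSimplexSet n v' a') ↔
    (∏ i, a i) / (n.factorial : ℚ) = (∏ i, a' i) / (n.factorial : ℚ) :=
  stdSimplex_same_orbit_iff_general n v a v' a' ha ha'
end

section
/- If for every coloring χ : ℚⁿ → Fin h there exists a monochromatic standard simplex of volume 1/n!, then for every such coloring and every positive rational V there exist infinitely many monochromatic standard simplices of volume V, and moreover infinitely many of them share the same color. -/
open Finset

/-!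
Rescaling one coordinate pulls colorings back so that simplices with `∏ aᵢ = 1` become
simplices with `∏ aᵢ = n! V`. By compactness of the space of colorings, finitely many candidate
simplices already contain a monochromatic one for every coloring. Translating a coloring by a
vector outside the finite set `P - (their vertices)` then yields a monochromatic simplex disjoint
from any prescribed finite set `P`, so there are infinitely many, and by pigeonhole infinitely
many of a single color.
-/

section Coloring

variable {α κ ι : Type*}

theorem isOpen_setOf_subsingleton_image [TopologicalSpace κ] [DiscreteTopology κ] {s : Set α}
    (hs : s.Finite) : IsOpen {χ : α → κ | (χ '' s).Subsingleton} := by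
  have : {χ : α → κ | (χ '' s).Subsingleton} = ⋂ x ∈ s, ⋂ y ∈ s, {χ | χ x = χ y} := by
    ext χ
    simp [Set.Subsingleton]
  rw [this]
  refine hs.isOpen_biInter fun x _ => hs.isOpen_biInter fun y _ => ?_
  have hcont : Continuous fun χ : α → κ => (χ x, χ y) := by fun_prop
  exact hcont.isOpen_preimage {p | p.1 = p.2} (isOpen_discrete _)

theorem exists_finset_forall_exists_subsingleton_image [Finite κ] {S : ι → Set α}
    (hS : ∀ i, (S i).Finite) (H : ∀ χ : α → κ, ∃ i, (χ '' S i).Subsingleton) :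
    ∃ u : Finset ι, ∀ χ : α → κ, ∃ i ∈ u, (χ '' S i).Subsingleton := by
  let _ : TopologicalSpace κ := ⊥
  have : DiscreteTopology κ := ⟨rfl⟩
  obtain ⟨u, hu⟩ := isCompact_univ.elim_finite_subcover _
    (fun i => isOpen_setOf_subsingleton_image (κ := κ) (hS i))
    fun χ _ => Set.mem_iUnion.2 (H χ)
  exact ⟨u, fun χ => by simpa using hu (Set.mem_univ χ)⟩

theorem exists_subsingleton_image_add_disjoint [AddGroup α] [Infinite α] [Finite κ]
    {S : ι → Set α} (hS : ∀ i, (S i).Finite) (H : ∀ χ : α → κ, ∃ i, (χ '' S i).Subsingleton)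
    (χ : α → κ) {P : Set α} (hP : P.Finite) :
    ∃ i t, (χ '' ((t + ·) '' S i)).Subsingleton ∧ Disjoint ((t + ·) '' S i) P := by
  obtain ⟨u, hu⟩ := exists_finset_forall_exists_subsingleton_image hS H
  obtain ⟨t, ht⟩ := (u.finite_toSet.biUnion fun i _ => hP.sub (hS i)).exists_notMem
  obtain ⟨i, hi, hmono⟩ := hu fun x => χ (t + x)
  refine ⟨i, t, by rwa [← Set.image_comp], Set.disjoint_left.2 ?_⟩
  rintro _ ⟨s, hs, rfl⟩ hp
  exact ht (Set.mem_biUnion hi ⟨t + s, hp, s, hs, by simp⟩)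

theorem Set.infinite_of_forall_exists_disjoint {𝓜 : Set (Set α)} (hfin : ∀ S ∈ 𝓜, S.Finite)
    (H : ∀ P : Set α, P.Finite → ∃ S ∈ 𝓜, S.Nonempty ∧ Disjoint S P) : 𝓜.Infinite := by
  intro h𝓜
  obtain ⟨S, hS, ⟨x, hx⟩, hdisj⟩ := H _ (h𝓜.sUnion hfin)
  exact hdisj.ne_of_mem hx (Set.mem_sUnion_of_mem hx hS) rfl

end Coloring

section StdSimplex

variable {n : ℕ}

theorem stdSimplexSet_finite (v a : Fin n → ℚ) : (stdSimplexSet n v a).Finite := by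
  rw [stdSimplexSet_eq_insert_range]
  exact (Set.finite_range _).insert v

theorem image_stdSimplexSet {f : (Fin n → ℚ) → Fin n → ℚ} {v a b : Fin n → ℚ}
    (hf : ∀ i, f (Function.update v i (v i + a i)) = Function.update (f v) i (f v i + b i)) :
    f '' stdSimplexSet n v a = stdSimplexSet n (f v) b := by
  simp only [stdSimplexSet_eq_insert_range, Set.image_insert_eq, ← Set.range_comp,
    Function.comp_def, hf]

theorem image_add_stdSimplexSet (t v a : Fin n → ℚ) :
    (t + ·) '' stdSimplexSet n v a = stdSimplexSet n (t + v) a := by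
  refine image_stdSimplexSet fun i => ?_
  rw [← Function.update_eq_self i t, ← Function.update_add, Function.update_eq_self i t]
  simp only [Pi.add_apply, add_assoc]

theorem image_mul_stdSimplexSet (d v a : Fin n → ℚ) :
    (d * ·) '' stdSimplexSet n v a = stdSimplexSet n (d * v) (d * a) := by
  refine image_stdSimplexSet fun i => ?_
  rw [← Function.update_eq_self i d, ← Function.update_mul, Function.update_eq_self i d]
  simp only [Pi.mul_apply, mul_add]

theorem subsingleton_image_stdSimplexSet_iff {κ : Type*} (χ : (Fin n → ℚ) → κ) (v a : Fin n → ℚ) :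
    (χ '' stdSimplexSet n v a).Subsingleton ↔ ∀ i, χ (Function.update v i (v i + a i)) = χ v := by
  rw [stdSimplexSet_eq_insert_range, Set.image_insert_eq, ← Set.range_comp]
  refine ⟨fun hs i => hs (Set.mem_insert_of_mem _ ⟨i, rfl⟩) (Set.mem_insert _ _), fun h => ?_⟩
  refine Set.subsingleton_of_forall_eq (χ v) ?_
  rintro _ (rfl | ⟨i, rfl⟩)
  exacts [rfl, h i]

theorem exists_subsingleton_image_stdSimplexSet_of_prod_eq_one {κ : Type*} [NeZero n]
    (H : ∀ χ : (Fin n → ℚ) → κ, ∃ v a : Fin n → ℚ,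
      (∀ i, 0 < a i) ∧ ∏ i, a i = 1 ∧ (χ '' stdSimplexSet n v a).Subsingleton)
    {c : ℚ} (hc : 0 < c) (χ : (Fin n → ℚ) → κ) :
    ∃ v a : Fin n → ℚ, (∀ i, 0 < a i) ∧ ∏ i, a i = c ∧ (χ '' stdSimplexSet n v a).Subsingleton := by
  set d : Fin n → ℚ := Function.update 1 0 c
  have hd : ∀ i, 0 < d i := by
    intro i
    rcases eq_or_ne i 0 with rfl | hi
    · simpa [d] using hc
    · simp [d, hi]
  obtain ⟨v, a, ha, hprod, hmono⟩ := H fun x => χ (d * x)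
  refine ⟨d * v, d * a, fun i => mul_pos (hd i) (ha i), ?_, ?_⟩
  · simp [Finset.prod_mul_distrib, hprod, d, Finset.prod_update_of_mem]
  · rwa [← image_mul_stdSimplexSet, ← Set.image_comp]

end StdSimplex

theorem infinitely_many_mono_simplices_general (n h : ℕ) (hn : 2 ≤ n)
    (H : ∀ χ : (Fin n → ℚ) → Fin h, ∃ (v : Fin n → ℚ) (a : Fin n → ℚ),
      (∀ i, 0 < a i) ∧ (∏ i, a i) = 1 ∧
      ∀ i, χ (Function.update v i (v i + a i)) = χ v) :
    ∀ (χ : (Fin n → ℚ) → Fin h) (V : ℚ), 0 < V →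
      {S : Set (Fin n → ℚ) | ∃ (v : Fin n → ℚ) (a : Fin n → ℚ),
        (∀ i, 0 < a i) ∧ (∏ i, a i) = (n.factorial : ℚ) * V ∧
        (∀ i, χ (Function.update v i (v i + a i)) = χ v) ∧
        S = stdSimplexSet n v a}.Infinite ∧
      ∃ c : Fin h,
        {S : Set (Fin n → ℚ) | ∃ (v : Fin n → ℚ) (a : Fin n → ℚ),
          (∀ i, 0 < a i) ∧ (∏ i, a i) = (n.factorial : ℚ) * V ∧
          (∀ i, χ (Function.update v i (v i + a i)) = χ v) ∧ χ v = c ∧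
          S = stdSimplexSet n v a}.Infinite := by
  intro χ V hV
  have : NeZero n := ⟨by omega⟩
  have hscaled (κ : (Fin n → ℚ) → Fin h) : ∃ p : {p : (Fin n → ℚ) × (Fin n → ℚ) //
      (∀ i, 0 < p.2 i) ∧ ∏ i, p.2 i = n.factorial * V},
      (κ '' stdSimplexSet n p.1.1 p.1.2).Subsingleton := by
    obtain ⟨v, a, ha, hprod, hmono⟩ :=
      exists_subsingleton_image_stdSimplexSet_of_prod_eq_one (c := n.factorial * V)
        (fun κ => by simpa only [subsingleton_image_stdSimplexSet_iff] using H κ)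
        (by positivity) κ
    exact ⟨⟨(v, a), ha, hprod⟩, hmono⟩
  refine (fun hinf => ⟨hinf, ?_⟩) (Set.infinite_of_forall_exists_disjoint ?_ fun P hP => ?_)
  · rintro S ⟨v, a, -, -, -, rfl⟩
    exact stdSimplexSet_finite v a
  · obtain ⟨⟨⟨v, a⟩, ha, hprod⟩, t, hmono, hdisj⟩ := exists_subsingleton_image_add_disjoint
      (fun p => stdSimplexSet_finite _ _) hscaled χ hP
    rw [image_add_stdSimplexSet, subsingleton_image_stdSimplexSet_iff] at hmono
    rw [image_add_stdSimplexSet] at hdisj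
    exact ⟨_, ⟨t + v, a, ha, hprod, hmono, rfl⟩, ⟨t + v, Set.mem_insert _ _⟩, hdisj⟩
  · by_contra! hfin
    refine hinf ((Set.finite_iUnion hfin).subset ?_)
    rintro S ⟨v, a, ha, hprod, hmono, rfl⟩
    exact Set.mem_iUnion.2 ⟨χ v, v, a, ha, hprod, hmono, rfl, rfl⟩

/-- If every `h`-coloring of `ℚⁿ` admits a monochromatic standard simplex of volume `1/n!`,
then for every such coloring and every positive rational `V` there are infinitely many
monochromatic standard simplices of volume `V`, and infinitely many of them share one color. -/
theorem infinitely_many_mono_simplices (n h : ℕ) (hn : 2 ≤ n) (hh : 1 ≤ h)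
    (H : ∀ χ : (Fin n → ℚ) → Fin h, ∃ (v : Fin n → ℚ) (a : Fin n → ℚ),
      (∀ i, 0 < a i) ∧ (∏ i, a i) = 1 ∧
      ∀ i, χ (Function.update v i (v i + a i)) = χ v) :
    ∀ (χ : (Fin n → ℚ) → Fin h) (V : ℚ), 0 < V →
      {S : Set (Fin n → ℚ) | ∃ (v : Fin n → ℚ) (a : Fin n → ℚ),
        (∀ i, 0 < a i) ∧ (∏ i, a i) = (n.factorial : ℚ) * V ∧
        (∀ i, χ (Function.update v i (v i + a i)) = χ v) ∧
        S = stdSimplexSet n v a}.Infinite ∧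
      ∃ c : Fin h,
        {S : Set (Fin n → ℚ) | ∃ (v : Fin n → ℚ) (a : Fin n → ℚ),
          (∀ i, 0 < a i) ∧ (∏ i, a i) = (n.factorial : ℚ) * V ∧
          (∀ i, χ (Function.update v i (v i + a i)) = χ v) ∧ χ v = c ∧
          S = stdSimplexSet n v a}.Infinite :=
  infinitely_many_mono_simplices_general n h hn H
end
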